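/- arXiv:1203.0042 — 2 statements merged into one kernel-verified Lean document; each statement's English description precedes it below -/
import Mathlib

section
/- Let r > 0. Suppose (F_n)_{n≥1} is a sequence of functions holomorphic on the closed disc {w ∈ ℂ : |w| ≤ r} and F₀ is holomorphic on the punctured closed disc {w : 0 < |w| ≤ r}. Assume F_n(w) → F₀(w) as n → ∞ for every w with 0 < |w| ≤ r, and that the convergence is uniform on the circle {|w| = r/2}. Then F₀ extends to a function holomorphic at w = 0, i.e. to a holomorphic function on the whole disc {|w| ≤ r}. -/
/-!
By the maximum modulus principle applied to `F m - F n`, uniform convergence on the circle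
`|w| = r/2` forces `(F n)` to be uniformly Cauchy on the whole closed disc of radius `r/2`. Its
uniform limit `G` is holomorphic on the open disc and agrees with `F₀` away from `0`, so
redefining `F₀` at `0` as `G 0` gives the holomorphic extension.
-/

open Complex Filter Metric Set Bornology Topology

section UniformCauchy

variable {ι E F : Type*} [NormedAddCommGroup E] [NormedSpace ℂ E] [Nontrivial E]
  [NormedAddCommGroup F] [NormedSpace ℂ F] {f : ι → E → F} {l : Filter ι}

theorem UniformCauchySeqOn.closure_of_frontier {U : Set E} (hU : IsBounded U)
    (hd : ∀ᶠ n in l, DiffContOnCl ℂ (f n) U) (h : UniformCauchySeqOn f l (frontier U)) :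
    UniformCauchySeqOn f l (closure U) := by
  intro u hu
  obtain ⟨ε, hε, hεu⟩ := mem_uniformity_dist.mp hu
  have hfr := h _ (dist_mem_uniformity (half_pos hε))
  filter_upwards [hfr, hd.prod_mk hd] with p hp ⟨hd₁, hd₂⟩ x hx
  apply hεu
  rw [dist_eq_norm]
  calc ‖f p.1 x - f p.2 x‖ ≤ ε / 2 :=
        norm_le_of_forall_mem_frontier_norm_le hU (hd₁.sub hd₂)
          (fun z hz => by simpa [dist_eq_norm] using (hp z hz).le) hx
    _ < ε := half_lt_self hε

theorem UniformCauchySeqOn.closedBall_of_sphere {c : E} {R : ℝ} (hR : R ≠ 0)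
    (hd : ∀ᶠ n in l, DiffContOnCl ℂ (f n) (ball c R)) (h : UniformCauchySeqOn f l (sphere c R)) :
    UniformCauchySeqOn f l (closedBall c R) := by
  rw [← closure_ball c hR]
  rw [← frontier_ball c hR] at h
  exact h.closure_of_frontier isBounded_ball hd

end UniformCauchy

theorem exists_differentiableOn_ball_tendsto_of_uniformCauchySeqOn_sphere
    {ι E : Type*} [NormedAddCommGroup E] [NormedSpace ℂ E] [CompleteSpace E]
    {f : ι → ℂ → E} {l : Filter ι} [l.NeBot] {c : ℂ} {R : ℝ} (hR : R ≠ 0)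
    (hd : ∀ᶠ n in l, DifferentiableOn ℂ (f n) (closedBall c R))
    (h : UniformCauchySeqOn f l (sphere c R)) :
    ∃ g : ℂ → E, DifferentiableOn ℂ g (ball c R) ∧
      ∀ w ∈ closedBall c R, Tendsto (fun n => f n w) l (𝓝 (g w)) := by
  have hcl : UniformCauchySeqOn f l (closedBall c R) :=
    h.closedBall_of_sphere hR (hd.mono fun n hn => hn.diffContOnCl_ball subset_rfl)
  choose! g hg using fun w (hw : w ∈ closedBall c R) =>
    CompleteSpace.complete (hcl.cauchy_map hw)
  refine ⟨g, ?_, hg⟩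
  have hunif : TendstoUniformlyOn f g l (closedBall c R) :=
    hcl.tendstoUniformlyOn_of_tendsto hg
  exact (hunif.tendstoLocallyUniformlyOn.mono ball_subset_closedBall).differentiableOn
    (hd.mono fun n hn => hn.mono ball_subset_closedBall) isOpen_ball

theorem DifferentiableOn.update_of_eqOn {𝕜 E F : Type*} [NontriviallyNormedField 𝕜]
    [NormedAddCommGroup E] [NormedSpace 𝕜 E] [NormedAddCommGroup F] [NormedSpace 𝕜 F]
    [DecidableEq E] {f g : E → F} {U V : Set E} {c : E} (hf : DifferentiableOn 𝕜 f U)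
    (hg : DifferentiableOn 𝕜 g V) (hU : IsOpen U) (hV : IsOpen V) (hfg : EqOn f g (V \ {c})) :
    DifferentiableOn 𝕜 (Function.update f c (g c)) (U \ {c} ∪ V) := by
  refine DifferentiableOn.union_of_isOpen (hf.mono sdiff_subset |>.congr ?_)
    (hg.congr ?_) (hU.sdiff isClosed_singleton) hV
  · intro x hx
    exact Function.update_of_ne hx.2 _ _
  · intro x hx
    by_cases hxc : x = c
    · subst hxc; simp
    · rw [Function.update_of_ne hxc]; exact hfg ⟨hx, hxc⟩

/-- if `(F_n)` are holomorphic on (a neighbourhood of) the closed disc of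
radius `r`, `F₀` is holomorphic on (a neighbourhood of) the punctured closed disc,
`F_n → F₀` pointwise on the punctured disc and uniformly on the circle `|w| = r/2`,
then `F₀` extends holomorphically over `w = 0`. -/
theorem statement9 (r : ℝ) (hr : 0 < r) (F : ℕ → ℂ → ℂ) (F₀ : ℂ → ℂ)
    (hF : ∀ n : ℕ, 1 ≤ n → ∃ U : Set ℂ, IsOpen U ∧ closedBall (0 : ℂ) r ⊆ U ∧
      DifferentiableOn ℂ (F n) U)
    (hF₀ : ∃ U : Set ℂ, IsOpen U ∧ (closedBall (0 : ℂ) r \ {0}) ⊆ U ∧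
      DifferentiableOn ℂ F₀ U)
    (hptw : ∀ w : ℂ, 0 < ‖w‖ → ‖w‖ ≤ r →
      Tendsto (fun n => F n w) atTop (nhds (F₀ w)))
    (hunif : TendstoUniformlyOn (fun n w => F n w) F₀ atTop (sphere (0 : ℂ) (r / 2))) :
    ∃ (g : ℂ → ℂ) (U : Set ℂ), IsOpen U ∧ closedBall (0 : ℂ) r ⊆ U ∧
      DifferentiableOn ℂ g U ∧
      ∀ w : ℂ, 0 < ‖w‖ → ‖w‖ ≤ r → g w = F₀ w := by
  obtain ⟨U, hUo, hUr, hF₀U⟩ := hF₀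
  have hr₂ : r / 2 ≤ r := by linarith
  have hdiff : ∀ᶠ n in atTop, DifferentiableOn ℂ (F n) (closedBall 0 (r / 2)) := by
    filter_upwards [eventually_ge_atTop 1] with n hn
    obtain ⟨V, -, hrV, hFV⟩ := hF n hn
    exact hFV.mono ((closedBall_subset_closedBall hr₂).trans hrV)
  obtain ⟨G, hG, hFG⟩ := exists_differentiableOn_ball_tendsto_of_uniformCauchySeqOn_sphere
    (by positivity) hdiff hunif.uniformCauchySeqOn
  have hGF₀ : EqOn F₀ G (ball 0 (r / 2) \ {0}) := fun w ⟨hw, hw0⟩ => by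
    have hw' := mem_ball_zero_iff.mp hw
    exact tendsto_nhds_unique (hptw w (norm_pos_iff.mpr hw0) (by linarith))
      (hFG w (ball_subset_closedBall hw))
  refine ⟨Function.update F₀ 0 (G 0), U \ {0} ∪ ball 0 (r / 2),
    (hUo.sdiff isClosed_singleton).union isOpen_ball, fun w hw => ?_,
    hF₀U.update_of_eqOn hG hUo isOpen_ball hGF₀, fun w hw _ => ?_⟩
  · by_cases hw0 : w = 0
    · exact Or.inr (by simpa [hw0] using hr)
    · exact Or.inl ⟨hUr ⟨hw, hw0⟩, hw0⟩
  · exact Function.update_of_ne (norm_pos_iff.mp hw) _ _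
end

section
/- For all η, ν, a, b, c₁, c₂ ∈ ℂ and all z ∈ ℂ: θ(2z−2η)·F_η(a,b,c₁,c₂; z−ν, −z−ν−η) + θ(2z+2η)·F_η(a,b,c₁,c₂; −z−ν, z−ν−η) = 0. (Equivalently, the difference operator 𝒜_ν(F_η) vanishes identically for every ν ∈ ℂ.) -/
/-!
Weierstrass' three-term identity
`θ(x+y)θ(x−y)θ(u+v)θ(u−v) − θ(x+v)θ(x−v)θ(u+y)θ(u−y) = θ(x+u)θ(x−u)θ(y+v)θ(y−v)`
factors `F_η(z₁, z₂)` into theta values of which only `θ(z₁−z₂+η)` tells the two points of the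
theorem apart. There it is `θ(2z+2η)`, resp. `θ(2η−2z)`, and the sum vanishes as `θ` is odd.

The three-term identity is an identity between products of four theta series, i.e. sums over
`ℤ⁴`. Splitting each by the parity of `n₁+n₂+n₃+n₄` into halves `E` and `O`, lattice
permutations give `E₁ = E₂`, `O₁ = O₃` and `O₂ = −E₃`, so `E₁ + O₁ − E₂ − O₂ = E₃ + O₃`.
-/

open Complex

noncomputable section

/-- The Jacobi theta function `θ₁(z|τ)`. -/
def θ (τ z : ℂ) : ℂ :=
  I * ∑' n : ℤ, (-1 : ℂ) ^ n * Complex.exp (Real.pi * I * τ * ((n : ℂ) - 1/2) ^ 2) *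
    Complex.exp (Real.pi * I * (2 * (n : ℂ) - 1) * z)

/-- `f(α,β,γ;z) = θ(z+α)θ(z+β)θ(z+γ)θ(z−α−β−γ)`. -/
def fV (τ α β γ z : ℂ) : ℂ :=
  θ τ (z + α) * θ τ (z + β) * θ τ (z + γ) * θ τ (z - α - β - γ)

/-- The generating relation functions `F_η(a,b,c₁,c₂;z₁,z₂)`. -/
def Fη (τ η a b c₁ c₂ z₁ z₂ : ℂ) : ℂ :=
  fV τ (a - η/2) (b - η/2) (c₁ + η/2) z₁ * fV τ (a + η/2) (b + η/2) (c₂ - η/2) z₂ -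
  fV τ (a - η/2) (b - η/2) (c₂ + η/2) z₁ * fV τ (a + η/2) (b + η/2) (c₁ - η/2) z₂

namespace Theta

def term (τ w : ℂ) (n : ℤ) : ℂ :=
  exp (Real.pi * I * ((n : ℂ) + τ * ((n : ℂ) - 1/2) ^ 2 + (2 * (n : ℂ) - 1) * w))

lemma theta_eq_tsum_term (τ w : ℂ) : θ τ w = I * ∑' n : ℤ, term τ w n := by
  refine congrArg (I * ·) (tsum_congr fun n => ?_)
  have hsign : (-1 : ℂ) ^ n = exp (Real.pi * I * n) := by
    rw [mul_comm, exp_int_mul, exp_pi_mul_I]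
  rw [hsign, ← exp_add, ← exp_add, term]
  ring_nf

lemma summable_term {τ : ℂ} (hτ : 0 < τ.im) (w : ℂ) : Summable (term τ w) := by
  have h (n : ℤ) : term τ w n =
      exp (Real.pi * I * (τ / 4 - w)) * jacobiTheta₂_term n (w + 1/2 - τ/2) τ := by
    rw [term, jacobiTheta₂_term, ← exp_add]
    ring_nf
  exact (((summable_jacobiTheta₂_term_iff _ τ).mpr hτ).mul_left _).congr fun n => (h n).symm

lemma summable_norm_term {τ : ℂ} (hτ : 0 < τ.im) (w : ℂ) :
    Summable fun n : ℤ => ‖term τ w n‖ :=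
  summable_norm_iff.mpr (summable_term hτ w)

lemma theta_neg (τ w : ℂ) : θ τ (-w) = -θ τ w := by
  have h (n : ℤ) : term τ (-w) n = -term τ w (Equiv.subLeft 1 n) := by
    rw [term, term, ← exp_add_pi_mul_I, exp_eq_exp_iff_exists_int]
    exact ⟨n - 1, by rw [Equiv.subLeft_apply]; push_cast; ring⟩
  rw [theta_eq_tsum_term, theta_eq_tsum_term, tsum_congr h, tsum_neg,
    (Equiv.subLeft 1).tsum_eq (term τ w), mul_neg]

abbrev Quad := (ℤ × ℤ) × (ℤ × ℤ)

def term4 (τ w₁ w₂ w₃ w₄ : ℂ) (n : Quad) : ℂ :=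
  term τ w₁ n.1.1 * term τ w₂ n.1.2 * term τ w₃ n.2.1 * term τ w₄ n.2.2

lemma summable_term4 {τ : ℂ} (hτ : 0 < τ.im) (w₁ w₂ w₃ w₄ : ℂ) :
    Summable (term4 τ w₁ w₂ w₃ w₄) := by
  have h₁₂ := (summable_norm_term hτ w₁).mul_norm (summable_norm_term hτ w₂)
  have h₃₄ := (summable_norm_term hτ w₃).mul_norm (summable_norm_term hτ w₄)
  exact (summable_mul_of_summable_norm h₁₂ h₃₄).congr fun n => by simp only [term4]; ring

lemma theta_mul_theta_mul_theta_mul_theta {τ : ℂ} (hτ : 0 < τ.im) (w₁ w₂ w₃ w₄ : ℂ) :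
    θ τ w₁ * θ τ w₂ * θ τ w₃ * θ τ w₄ = ∑' n : Quad, term4 τ w₁ w₂ w₃ w₄ n := by
  have hs := summable_norm_term hτ
  have hI (A B C D : ℂ) : I * A * (I * B) * (I * C) * (I * D) = A * B * (C * D) := by
    linear_combination (A * B * C * D) * (congrArg (· ^ 2) I_mul_I)
  rw [theta_eq_tsum_term, theta_eq_tsum_term, theta_eq_tsum_term, theta_eq_tsum_term, hI,
    tsum_mul_tsum_of_summable_norm (hs w₁) (hs w₂), tsum_mul_tsum_of_summable_norm (hs w₃) (hs w₄),
    tsum_mul_tsum_of_summable_norm ((hs w₁).mul_norm (hs w₂)) ((hs w₃).mul_norm (hs w₄))]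
  exact tsum_congr fun n => (mul_assoc _ _ _).symm

def IsEvenQuad (n : Quad) : Prop := Even (n.1.1 + n.1.2 + n.2.1 + n.2.2)

def evenLift (n : Quad) : Quad := ((n.1.1, n.1.2), (n.2.1, n.1.1 + n.1.2 + n.2.1 + 2 * n.2.2))

def oddLift (n : Quad) : Quad := ((n.1.1, n.1.2), (n.2.1, n.1.1 + n.1.2 + n.2.1 + 2 * n.2.2 + 1))

def evenLiftEquiv : Quad ≃ {n : Quad // IsEvenQuad n} where
  toFun n := ⟨evenLift n, by simp only [IsEvenQuad, evenLift, Int.even_iff]; omega⟩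
  invFun m := ((m.1.1.1, m.1.1.2), (m.1.2.1, (m.1.2.2 - m.1.1.1 - m.1.1.2 - m.1.2.1) / 2))
  left_inv := fun ⟨⟨a, b⟩, c, d⟩ => by simp only [evenLift, Prod.mk.injEq, true_and]; omega
  right_inv := fun ⟨⟨⟨a, b⟩, c, d⟩, h⟩ => by
    simp only [IsEvenQuad, Int.even_iff] at h
    simp only [evenLift, Subtype.mk.injEq, Prod.mk.injEq, true_and]
    omega

def oddLiftEquiv : Quad ≃ {n : Quad // ¬IsEvenQuad n} where
  toFun n := ⟨oddLift n, by simp only [IsEvenQuad, oddLift, Int.not_even_iff]; omega⟩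
  invFun m := ((m.1.1.1, m.1.1.2), (m.1.2.1, (m.1.2.2 - m.1.1.1 - m.1.1.2 - m.1.2.1 - 1) / 2))
  left_inv := fun ⟨⟨a, b⟩, c, d⟩ => by simp only [oddLift, Prod.mk.injEq, true_and]; omega
  right_inv := fun ⟨⟨⟨a, b⟩, c, d⟩, h⟩ => by
    simp only [IsEvenQuad, Int.not_even_iff] at h
    simp only [oddLift, Subtype.mk.injEq, Prod.mk.injEq, true_and]
    omega

lemma tsum_eq_tsum_evenLift_add_tsum_oddLift {f : Quad → ℂ} (hf : Summable f) :
    ∑' n, f n = ∑' n, f (evenLift n) + ∑' n, f (oddLift n) := by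
  rw [← hf.tsum_subtype_add_tsum_subtype_compl {n | IsEvenQuad n}]
  exact congrArg₂ (· + ·) (evenLiftEquiv.tsum_eq fun m => f m).symm
    (oddLiftEquiv.tsum_eq fun m => f m).symm

/- Each permutation below matches the parts of the exponents that are linear in `x, y, u, v`;
the quadratic parts then agree modulo `2πi`, up to the extra `πi` of the sign in the last one. -/

def swapYV : Equiv.Perm Quad where
  toFun n := ((-n.2.2, n.1.1 + n.1.2 + n.2.2), (n.1.1 + n.2.1 + n.2.2, -n.1.1))
  invFun n := ((-n.2.2, n.1.1 + n.1.2 + n.2.2), (n.1.1 + n.2.1 + n.2.2, -n.1.1))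
  left_inv n := by ext <;> dsimp only <;> ring
  right_inv n := by ext <;> dsimp only <;> ring

def swapYU : Equiv.Perm Quad where
  toFun n := ((n.1.1 + n.1.2 + n.2.1 + n.2.2, -n.2.1 - n.2.2), (-n.1.2 - n.2.2, n.2.2))
  invFun n := ((n.1.1 + n.1.2 + n.2.1 + n.2.2, -n.2.1 - n.2.2), (-n.1.2 - n.2.2, n.2.2))
  left_inv n := by ext <;> dsimp only <;> ring
  right_inv n := by ext <;> dsimp only <;> ring

def oddToEven : Equiv.Perm Quad where
  toFun n := ((n.1.1 + n.1.2 + n.2.1 + n.2.2, -n.2.1 - n.2.2), (-n.1.2 - n.2.2, -n.1.1))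
  invFun n :=
    ((-n.2.2, n.1.1 + n.1.2 + n.2.2), (n.1.1 + n.2.1 + n.2.2, -n.1.1 - n.1.2 - n.2.1 - n.2.2))
  left_inv n := by ext <;> dsimp only <;> ring
  right_inv n := by ext <;> dsimp only <;> ring

section Reindex

variable (τ x y u v : ℂ)

lemma term4_evenLift_swapYV (n : Quad) :
    term4 τ (x + y) (x - y) (u + v) (u - v) (evenLift n) =
      term4 τ (x + v) (x - v) (u + y) (u - y) (evenLift (swapYV n)) := by
  obtain ⟨⟨a, b⟩, c, d⟩ := n
  simp only [term4, term, evenLift, swapYV, Equiv.coe_fn_mk, ← exp_add]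
  exact congrArg exp (by push_cast; ring)

lemma term4_oddLift_swapYU (n : Quad) :
    term4 τ (x + y) (x - y) (u + v) (u - v) (oddLift n) =
      term4 τ (x + u) (x - u) (y + v) (y - v) (oddLift (swapYU n)) := by
  obtain ⟨⟨a, b⟩, c, d⟩ := n
  simp only [term4, term, oddLift, swapYU, Equiv.coe_fn_mk, ← exp_add]
  rw [exp_eq_exp_iff_exists_int]
  exact ⟨b + c + d, by push_cast; ring⟩

lemma term4_oddLift_oddToEven (n : Quad) :
    term4 τ (x + v) (x - v) (u + y) (u - y) (oddLift n) =
      -term4 τ (x + u) (x - u) (y + v) (y - v) (evenLift (oddToEven n)) := by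
  obtain ⟨⟨a, b⟩, c, d⟩ := n
  simp only [term4, term, evenLift, oddLift, oddToEven, Equiv.coe_fn_mk, ← exp_add,
    ← exp_add_pi_mul_I]
  rw [exp_eq_exp_iff_exists_int]
  exact ⟨a + b + c + 2 * d, by push_cast; ring⟩

end Reindex

theorem theta_three_term {τ : ℂ} (hτ : 0 < τ.im) (x y u v : ℂ) :
    θ τ (x + y) * θ τ (x - y) * θ τ (u + v) * θ τ (u - v)
      - θ τ (x + v) * θ τ (x - v) * θ τ (u + y) * θ τ (u - y)
    = θ τ (x + u) * θ τ (x - u) * θ τ (y + v) * θ τ (y - v) := by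
  simp only [theta_mul_theta_mul_theta_mul_theta hτ]
  rw [tsum_eq_tsum_evenLift_add_tsum_oddLift (summable_term4 hτ ..),
    tsum_eq_tsum_evenLift_add_tsum_oddLift (summable_term4 hτ ..),
    tsum_eq_tsum_evenLift_add_tsum_oddLift (summable_term4 hτ ..),
    tsum_congr (term4_evenLift_swapYV τ x y u v), tsum_congr (term4_oddLift_swapYU τ x y u v),
    tsum_congr (term4_oddLift_oddToEven τ x y u v), tsum_neg,
    swapYV.tsum_eq fun n => term4 τ (x + v) (x - v) (u + y) (u - y) (evenLift n),
    swapYU.tsum_eq fun n => term4 τ (x + u) (x - u) (y + v) (y - v) (oddLift n),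
    oddToEven.tsum_eq fun n => term4 τ (x + u) (x - u) (y + v) (y - v) (evenLift n)]
  ring

end Theta

lemma Fη_eq_mul {τ : ℂ} (hτ : 0 < τ.im) (η a b c₁ c₂ z₁ z₂ : ℂ) :
    Fη τ η a b c₁ c₂ z₁ z₂ =
      θ τ (z₁ + a - η/2) * θ τ (z₁ + b - η/2) * θ τ (z₂ + a + η/2) * θ τ (z₂ + b + η/2) *
        θ τ (c₁ + c₂ + a + b) * θ τ (c₁ - c₂) * θ τ (z₁ + z₂ - a - b) * θ τ (z₁ - z₂ + η) := by
  have h := Theta.theta_three_term hτ (z₁ - (a + b)/2 + η/2) (c₁ + (a + b)/2)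
    (z₂ - (a + b)/2 - η/2) (c₂ + (a + b)/2)
  unfold Fη fV
  linear_combination (norm := ring_nf)
    θ τ (z₁ + a - η/2) * θ τ (z₁ + b - η/2) * θ τ (z₂ + a + η/2) * θ τ (z₂ + b + η/2) * h

/-- Lemma B.2: for all `η, ν, a, b, c₁, c₂, z ∈ ℂ`,
`θ(2z−2η)·F_η(a,b,c₁,c₂;z−ν,−z−ν−η) + θ(2z+2η)·F_η(a,b,c₁,c₂;−z−ν,z−ν−η) = 0`;
equivalently, the difference operator `𝒜_ν(F_η)` vanishes identically. -/
theorem statement17 (τ : ℂ) (hτ : 0 < τ.im) (η ν a b c₁ c₂ z : ℂ) :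
    θ τ (2 * z - 2 * η) * Fη τ η a b c₁ c₂ (z - ν) (-z - ν - η) +
      θ τ (2 * z + 2 * η) * Fη τ η a b c₁ c₂ (-z - ν) (z - ν - η) = 0 := by
  rw [Fη_eq_mul hτ, Fη_eq_mul hτ, show -z - ν - (z - ν - η) + η = -(2 * z - 2 * η) by ring,
    Theta.theta_neg, show z - ν - (-z - ν - η) + η = 2 * z + 2 * η by ring]
  ring_nf
end
end
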